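/- arXiv:0902.1932 — 2 statements merged into one kernel-verified Lean document; each statement's English description precedes it below -/
import Mathlib

section
/- The cardinality constrained matroid polytope P^c(E) is completely described by the following linear system: P^c(E) equals the set of all x ∈ ℝ^E satisfying (1) the rank induced forbidden set inequalities (c_{p+1} − r(F))·x(F) − (r(F) − c_p)·x(E∖F) ≤ c_p·(c_{p+1} − r(F)) for all F ⊆ E with c_p < r(F) < c_{p+1} for some p ∈ {1, …, m−1}, (2) the cardinality bounds c_1 ≤ x(E) ≤ c_m, (3) the rank inequalities x(F) ≤ r(F) for all nonempty F ⊆ E, and (4) the nonnegativity constraints x_e ≥ 0 for all e ∈ E. -/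
open Finset

/-- A (loopless) matroid on a finite ground set, given by its independent sets. -/
structure FinMatroid (α : Type*) [Fintype α] [DecidableEq α] where
  Indep : Finset α → Prop
  empty_indep : Indep ∅
  subset_indep : ∀ ⦃I J : Finset α⦄, Indep J → I ⊆ J → Indep I
  exchange : ∀ ⦃I J : Finset α⦄, Indep I → Indep J → I.card < J.card →
    ∃ e ∈ J \ I, Indep (insert e I)
  loopless : ∀ e : α, Indep {e}

variable {α : Type*} [Fintype α] [DecidableEq α]

open Classical in
/-- The rank of a set: the maximum cardinality of an independent subset. -/
noncomputable def FinMatroid.r (M : FinMatroid α) (F : Finset α) : ℕ :=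
  (F.powerset.filter M.Indep).sup Finset.card

/-- incidence vector -/
noncomputable def incVec (I : Finset α) : α → ℝ := fun e => if e ∈ I then 1 else 0

/-- x(S) = ∑_{e ∈ S} x_e -/
noncomputable def fsum (x : α → ℝ) (S : Finset α) : ℝ := ∑ e ∈ S, x e

/-- closed set -/
def FinMatroid.ClosedSet (M : FinMatroid α) (F : Finset α) : Prop :=
  ∀ e ∉ F, M.r F < M.r (insert e F)

/-- F is separable -/
def FinMatroid.Separable (M : FinMatroid α) (F : Finset α) : Prop :=
  ∃ F₁ F₂ : Finset α, F₁ ≠ ∅ ∧ F₂ ≠ ∅ ∧ Disjoint F₁ F₂ ∧ F₁ ∪ F₂ = F ∧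
    M.r F₁ + M.r F₂ ≤ M.r F

def FinMatroid.Inseparable (M : FinMatroid α) (F : Finset α) : Prop :=
  ¬ M.Separable F

/-- the k-rank r^k(F) = k - r(E \ F), as an integer -/
noncomputable def FinMatroid.krank (M : FinMatroid α) (k : ℕ) (F : Finset α) : ℤ :=
  (k : ℤ) - (M.r Fᶜ : ℤ)

/-- F is k-separable -/
noncomputable def FinMatroid.kSeparable (M : FinMatroid α) (k : ℕ) (F : Finset α) : Prop :=
  ∃ F₁ F₂ : Finset α, F₁ ≠ ∅ ∧ F₂ ≠ ∅ ∧ Disjoint F₁ F₂ ∧ F₁ ∪ F₂ = F ∧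
    M.krank k F₁ + M.krank k F₂ = M.krank k F

noncomputable def FinMatroid.kInseparable (M : FinMatroid α) (k : ℕ) (F : Finset α) : Prop :=
  ¬ M.kSeparable k F

/-- convex hull of incidence vectors of independent sets of cardinality exactly k -/
noncomputable def exactPolytope (M : FinMatroid α) (k : ℕ) : Set (α → ℝ) :=
  convexHull ℝ {x | ∃ I : Finset α, M.Indep I ∧ I.card = k ∧ x = incVec I}

/-- the cardinality constrained matroid polytope P^c(E) -/
noncomputable def cardPolytope (M : FinMatroid α) {m : ℕ} (c : Fin m → ℕ) : Set (α → ℝ) :=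
  convexHull ℝ {x | ∃ I : Finset α, M.Indep I ∧ (∃ p : Fin m, I.card = c p) ∧ x = incVec I}

/-- dimension of (the affine hull of) a subset of ℝ^E -/
noncomputable def polyDim (s : Set (α → ℝ)) : ℕ :=
  Module.finrank ℝ (affineSpan ℝ s).direction

/-- `a · x ≤ a₀` defines a facet of `P` -/
noncomputable def IsFacet (P : Set (α → ℝ)) (a : α → ℝ) (a₀ : ℝ) : Prop :=
  (∀ x ∈ P, ∑ e, a e * x e ≤ a₀) ∧
  polyDim {x ∈ P | ∑ e, a e * x e = a₀} + 1 = polyDim P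

/-!
The generators satisfy the system and the system is convex, so `P^c(E)` lies inside it.
Conversely, let `x` satisfy the system, let `w` be a weight and order `E` by decreasing weight;
choose `p` with `c_p ≤ x(E) ≤ c_{p+1}` and write `x(E) = (1 - θ) c_p + θ c_{p+1}`. The greedy
algorithm along this order yields independent sets `I₀`, `I₁` of sizes `c_p`, `c_{p+1}` meeting
every prefix `G` in `min (r G) c_p`, resp. `min (r G) c_{p+1}`, elements. The rank, forbidden set
and cardinality constraints say precisely that `x(G) ≤ y(G)` on every prefix, for
`y = (1 - θ) χ^{I₀} + θ χ^{I₁}`, with equality on `E`; Abel summation gives `w · x ≤ w · y`, so no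
linear functional separates `x` from `P^c(E)`.
-/

namespace FinMatroid

variable (M : FinMatroid α)

theorem card_le_r {I F : Finset α} (hI : M.Indep I) (hIF : I ⊆ F) : I.card ≤ M.r F := by
  classical
  exact Finset.le_sup (f := Finset.card) (mem_filter.2 ⟨mem_powerset.2 hIF, hI⟩)

theorem exists_indep_card_eq_r (F : Finset α) : ∃ I ⊆ F, M.Indep I ∧ I.card = M.r F := by
  classical
  obtain ⟨I, hI, hIr⟩ := exists_mem_eq_sup (F.powerset.filter M.Indep)
    ⟨∅, mem_filter.2 ⟨empty_mem_powerset F, M.empty_indep⟩⟩ Finset.card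
  rw [mem_filter, mem_powerset] at hI
  exact ⟨I, hI.1, hI.2, by rw [r, hIr]⟩

theorem r_mono {F G : Finset α} (h : F ⊆ G) : M.r F ≤ M.r G := by
  obtain ⟨I, hIF, hI, hcard⟩ := M.exists_indep_card_eq_r F
  exact hcard ▸ M.card_le_r hI (hIF.trans h)

theorem r_empty : M.r ∅ = 0 := by
  obtain ⟨I, hI, -, hcard⟩ := M.exists_indep_card_eq_r ∅
  rw [← hcard, subset_empty.1 hI, card_empty]

theorem r_insert_le (a : α) (F : Finset α) : M.r (insert a F) ≤ M.r F + 1 := by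
  obtain ⟨I, hIF, hI, hcard⟩ := M.exists_indep_card_eq_r (insert a F)
  have hsub : I.erase a ⊆ F := subset_insert_iff.1 hIF
  have := M.card_le_r (M.subset_indep hI (erase_subset a I)) hsub
  have := pred_card_le_card_erase (s := I) (a := a)
  omega

theorem card_inter_le_min {I : Finset α} {k : ℕ} (hI : M.Indep I) (hIk : I.card ≤ k)
    (F : Finset α) : (I ∩ F).card ≤ min (M.r F) k :=
  le_min (M.card_le_r (M.subset_indep hI inter_subset_left) inter_subset_right)
    ((card_le_card inter_subset_left).trans hIk)

theorem exists_insert_indep {J F : Finset α} (hJ : M.Indep J) (h : J.card < M.r F) :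
    ∃ a ∈ F, a ∉ J ∧ M.Indep (insert a J) := by
  obtain ⟨I, hIF, hI, hcard⟩ := M.exists_indep_card_eq_r F
  obtain ⟨a, ha, hind⟩ := M.exchange hJ hI (hcard ▸ h)
  rw [mem_sdiff] at ha
  exact ⟨a, hIF ha.1, ha.2, hind⟩

end FinMatroid

section fsum

variable {ι : Type*}

theorem fsum_add (x y : ι → ℝ) (S : Finset ι) : fsum (x + y) S = fsum x S + fsum y S :=
  sum_add_distrib

theorem fsum_sub (x y : ι → ℝ) (S : Finset ι) : fsum (x - y) S = fsum x S - fsum y S :=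
  sum_sub_distrib x y

theorem fsum_smul (a : ℝ) (x : ι → ℝ) (S : Finset ι) : fsum (a • x) S = a * fsum x S :=
  (mul_sum S x a).symm

theorem isLinearMap_fsum (S : Finset ι) : IsLinearMap ℝ (fsum · S : (ι → ℝ) → ℝ) :=
  ⟨fun x y => fsum_add x y S, fun a x => fsum_smul a x S⟩

theorem convex_setOf_fsum_sub_le (a b d : ℝ) (F G : Finset ι) :
    Convex ℝ {x : ι → ℝ | a * fsum x F - b * fsum x G ≤ d} :=
  convex_halfSpace_le ((a • (isLinearMap_fsum F).mk' - b • (isLinearMap_fsum G).mk').isLinear) d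

theorem incVec_nonneg [DecidableEq ι] (I : Finset ι) (a : ι) : 0 ≤ incVec I a := by
  unfold incVec
  split_ifs <;> norm_num

theorem fsum_incVec [DecidableEq ι] (I S : Finset ι) : fsum (incVec I) S = ((I ∩ S).card : ℝ) := by
  simp only [fsum, incVec]
  rw [sum_boole, filter_mem_eq_inter, inter_comm]

theorem fsum_compl [Fintype ι] [DecidableEq ι] (x : ι → ℝ) (F : Finset ι) :
    fsum x Fᶜ = fsum x univ - fsum x F := by
  rw [fsum, fsum, fsum, ← sum_add_sum_compl F x, add_sub_cancel_left]

end fsum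

section prefixSet

variable {ι : Type*} [DecidableEq ι] {n : ℕ}

def prefixSet (e : Fin n → ι) (j : ℕ) : Finset ι :=
  (univ.filter fun i : Fin n => i.val < j).image e

theorem prefixSet_zero (e : Fin n → ι) : prefixSet e 0 = ∅ := by
  simp [prefixSet]

theorem prefixSet_succ (e : Fin n → ι) (j : Fin n) :
    prefixSet e (j + 1) = insert (e j) (prefixSet e j) := by
  rw [prefixSet, prefixSet, ← image_insert]
  congr 1
  ext i
  simp only [mem_filter, mem_univ, true_and, mem_insert, Nat.lt_succ_iff, Fin.ext_iff]
  omega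

theorem apply_notMem_prefixSet {e : Fin n → ι} (he : Function.Injective e) (j : Fin n) :
    e j ∉ prefixSet e j := by
  simp [prefixSet, he.eq_iff]

theorem prefixSet_eq_univ [Fintype ι] (e : Fin n ≃ ι) : prefixSet e n = univ := by
  simp [prefixSet]

/-- Abel summation, run as an induction on the prefix length: the bound holds for every lower bound
`v` of the weights seen so far. -/
theorem mul_fsum_prefixSet_le_sum {e : Fin n → ι}
    (he : Function.Injective e) {w d : ι → ℝ} (hw : Antitone (w ∘ e))
    (hd : ∀ j ≤ n, 0 ≤ fsum d (prefixSet e j)) {v : ℝ} (hv : ∀ i, v ≤ w (e i)) :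
    v * fsum d (prefixSet e n) ≤ ∑ a ∈ prefixSet e n, w a * d a := by
  suffices h : ∀ j ≤ n, ∀ v : ℝ, (∀ i : Fin n, i.val < j → v ≤ w (e i)) →
      v * fsum d (prefixSet e j) ≤ ∑ a ∈ prefixSet e j, w a * d a from
    h n le_rfl v fun i _ => hv i
  intro j
  induction j with
  | zero => simp [prefixSet_zero, fsum]
  | succ j ih =>
    intro hj v hv
    let i : Fin n := ⟨j, hj⟩
    have hpos := hd (j + 1) hj
    have hv_i : v ≤ w (e i) := hv i (Nat.lt_succ_self j)
    have ih_i := ih (Nat.le_of_succ_le hj) (w (e i)) fun i' hi' => hw (Fin.le_def.2 hi'.le)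
    rw [show j + 1 = i.val + 1 from rfl, prefixSet_succ] at hpos ⊢
    rw [fsum, sum_insert (apply_notMem_prefixSet he i)] at hpos ⊢
    rw [sum_insert (apply_notMem_prefixSet he i)]
    calc v * (d (e i) + ∑ a ∈ prefixSet e i, d a)
        ≤ w (e i) * (d (e i) + ∑ a ∈ prefixSet e i, d a) := mul_le_mul_of_nonneg_right hv_i hpos
      _ ≤ w (e i) * d (e i) + ∑ a ∈ prefixSet e i, w a * d a := by
        rw [fsum] at ih_i
        linarith

theorem sum_mul_le_of_fsum_prefixSet_le [Fintype ι] (e : Fin n ≃ ι) {w : ι → ℝ}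
    (hw : Antitone (w ∘ e)) {x y : ι → ℝ}
    (hpre : ∀ j ≤ n, fsum x (prefixSet e j) ≤ fsum y (prefixSet e j))
    (huniv : fsum x univ = fsum y univ) :
    ∑ a, w a * x a ≤ ∑ a, w a * y a := by
  obtain ⟨v, hv⟩ := (Set.finite_range (w ∘ e)).bddBelow
  have hd : ∀ j ≤ n, 0 ≤ fsum (y - x) (prefixSet e j) := fun j hj => by
    rw [fsum_sub]
    exact sub_nonneg.2 (hpre j hj)
  have h0 : fsum (y - x) univ = 0 := by
    rw [fsum_sub, huniv, sub_self]
  have := mul_fsum_prefixSet_le_sum e.injective hw hd fun i => hv ⟨i, rfl⟩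
  rw [prefixSet_eq_univ, h0, mul_zero] at this
  simpa only [Pi.sub_apply, mul_sub, sum_sub_distrib, sub_nonneg] using this

end prefixSet

theorem exists_equiv_antitone {ι : Type*} [Fintype ι] (w : ι → ℝ) :
    ∃ e : Fin (Fintype.card ι) ≃ ι, Antitone (w ∘ e) := by
  let e₀ := (Fintype.equivFin ι).symm
  have hsort := Tuple.monotone_sort (OrderDual.toDual ∘ w ∘ e₀)
  exact ⟨(Tuple.sort (OrderDual.toDual ∘ w ∘ e₀)).trans e₀, monotone_toDual_comp_iff.1 hsort⟩

theorem mem_convexHull_of_forall_sum_mul_le {ι : Type*} [Fintype ι] {S : Set (ι → ℝ)}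
    (hS : S.Finite) {x : ι → ℝ}
    (h : ∀ w : ι → ℝ, ∃ y ∈ convexHull ℝ S, ∑ a, w a * x a ≤ ∑ a, w a * y a) :
    x ∈ convexHull ℝ S := by
  classical
  by_contra hx
  obtain ⟨f, u, hfu, hux⟩ :=
    geometric_hahn_banach_closed_point (convex_convexHull ℝ S) (hS.isClosed_convexHull ℝ) hx
  have hf : ∀ z, f z = ∑ a, f (fun b => if a = b then 1 else 0) * z a := fun z => by
    simp_rw [mul_comm _ (z _)]
    exact (f : (ι → ℝ) →ₗ[ℝ] ℝ).pi_apply_eq_sum_univ z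
  obtain ⟨y, hy, hxy⟩ := h _
  linarith [hfu y hy, hf x, hf y]

namespace FinMatroid

variable (M : FinMatroid α)

theorem exists_indep_card_eq_min_insert {J P : Finset α} (a : α) {k : ℕ} (hJ : M.Indep J)
    (hJP : J ⊆ P) (hcard : J.card = min (M.r P) k) :
    ∃ J', M.Indep J' ∧ J ⊆ J' ∧ J' ⊆ insert a P ∧ J'.card = min (M.r (insert a P)) k := by
  have hmono := M.r_mono (subset_insert a P)
  have hstep := M.r_insert_le a P
  by_cases hsame : min (M.r (insert a P)) k = min (M.r P) k
  · exact ⟨J, hJ, subset_rfl, hJP.trans (subset_insert a P), hcard.trans hsame.symm⟩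
  · obtain ⟨b, hb, hbJ, hind⟩ := M.exists_insert_indep hJ (show J.card < M.r (insert a P) by omega)
    refine ⟨insert b J, hind, subset_insert b J,
      insert_subset hb (hJP.trans (subset_insert a P)), ?_⟩
    rw [card_insert_of_notMem hbJ]
    omega

theorem exists_indep_forall_card_inter_prefixSet {n : ℕ} (e : Fin n → α) (k : ℕ) :
    ∃ I, M.Indep I ∧ ∀ j ≤ n, (I ∩ prefixSet e j).card = min (M.r (prefixSet e j)) k := by
  suffices h : ∀ j ≤ n, ∃ J, M.Indep J ∧ J ⊆ prefixSet e j ∧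
      ∀ j' ≤ j, (J ∩ prefixSet e j').card = min (M.r (prefixSet e j')) k by
    obtain ⟨I, hI, -, hcard⟩ := h n le_rfl
    exact ⟨I, hI, hcard⟩
  intro j
  induction j with
  | zero =>
    refine fun _ => ⟨∅, M.empty_indep, empty_subset _, fun j' hj' => ?_⟩
    obtain rfl : j' = 0 := Nat.le_zero.1 hj'
    simp [prefixSet_zero, r_empty]
  | succ j ih =>
    intro hj
    obtain ⟨J, hJ, hJP, hJcard⟩ := ih (by omega)
    have hcard : J.card = min (M.r (prefixSet e j)) k := by
      rw [← inter_eq_left.2 hJP, hJcard j le_rfl]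
    obtain ⟨J', hJ', hJJ', hJ'P, hJ'card⟩ :=
      M.exists_indep_card_eq_min_insert (e ⟨j, hj⟩) hJ hJP hcard
    rw [← prefixSet_succ e ⟨j, hj⟩] at hJ'P hJ'card
    refine ⟨J', hJ', hJ'P, fun j' hj' => ?_⟩
    rcases Nat.le_succ_iff.1 hj' with hj' | rfl
    · refine le_antisymm (M.card_inter_le_min hJ' (hJ'card ▸ min_le_right _ _) _) ?_
      exact hJcard j' hj' ▸ card_le_card (inter_subset_inter_right hJJ')
    · rw [inter_eq_left.2 hJ'P, hJ'card]

theorem exists_indep_card_eq_forall_card_inter_prefixSet (e : Fin (Fintype.card α) ≃ α) {k : ℕ}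
    (hk : k ≤ M.r univ) : ∃ I, M.Indep I ∧ I.card = k ∧
      ∀ j ≤ Fintype.card α, (I ∩ prefixSet e j).card = min (M.r (prefixSet e j)) k := by
  obtain ⟨I, hI, hIe⟩ := M.exists_indep_forall_card_inter_prefixSet e k
  refine ⟨I, hI, ?_, hIe⟩
  simpa [prefixSet_eq_univ, hk] using hIe _ le_rfl

end FinMatroid

theorem forbidden_ineq_of_card_gap {k₀ k₁ ρ s N : ℝ} (h₀ : k₀ < ρ) (h₁ : ρ < k₁) (hsρ : s ≤ ρ)
    (hsN : s ≤ N) (hN : N ≤ k₀ ∨ k₁ ≤ N) :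
    (k₁ - ρ) * s - (ρ - k₀) * (N - s) ≤ k₀ * (k₁ - ρ) := by
  rcases hN with hN | hN
  · nlinarith [mul_nonneg (sub_nonneg.2 h₀.le) (sub_nonneg.2 hsN)]
  · nlinarith [mul_nonneg (sub_nonneg.2 h₀.le) (sub_nonneg.2 hN)]

theorem le_interp_min {k₀ k₁ ρ s t a b : ℝ} (hk : k₀ < k₁) (hsρ : s ≤ ρ) (hst : s ≤ t)
    (hforb : k₀ < ρ → ρ < k₁ → (k₁ - ρ) * s - (ρ - k₀) * (t - s) ≤ k₀ * (k₁ - ρ))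
    (hab : a + b = 1) (ht : t = a * k₀ + b * k₁) :
    s ≤ a * min ρ k₀ + b * min ρ k₁ := by
  rcases le_or_gt ρ k₀ with hρ₀ | hρ₀
  · rw [min_eq_left hρ₀, min_eq_left (hρ₀.trans hk.le), ← add_mul, hab, one_mul]
    exact hsρ
  rcases lt_or_ge ρ k₁ with hρ₁ | hρ₁
  · rw [min_eq_right hρ₀.le, min_eq_left hρ₁.le]
    obtain rfl : a = 1 - b := eq_sub_of_add_eq hab
    have key : (k₁ - k₀) * s ≤ (k₁ - k₀) * ((1 - b) * k₀ + b * ρ) := by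
      rw [ht] at hforb
      nlinarith [hforb hρ₀ hρ₁]
    exact le_of_mul_le_mul_left key (sub_pos.2 hk)
  · rw [min_eq_right hρ₀.le, min_eq_right hρ₁, ← ht]
    exact hst

theorem exists_le_and_le_succ {m : ℕ} (c : Fin m → ℕ) {t : ℝ} (hm : 2 ≤ m)
    (h₀ : (c ⟨0, Nat.zero_lt_of_lt hm⟩ : ℝ) ≤ t) (h₁ : t ≤ c ⟨m - 1, Nat.sub_one_lt_of_lt hm⟩) :
    ∃ p : Fin m, ∃ hp : p.val + 1 < m, (c p : ℝ) ≤ t ∧ t ≤ c ⟨p.val + 1, hp⟩ := by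
  suffices h : ∀ N, ∀ hN : N + 1 < m, t ≤ c ⟨N + 1, hN⟩ →
      ∃ p : Fin m, ∃ hp : p.val + 1 < m, (c p : ℝ) ≤ t ∧ t ≤ c ⟨p.val + 1, hp⟩ by
    obtain ⟨k, rfl⟩ : ∃ k, m = k + 2 := ⟨m - 2, by omega⟩
    exact h k (by omega) h₁
  intro N
  induction N with
  | zero => exact fun hN h => ⟨⟨0, by omega⟩, hN, h₀, h⟩
  | succ N ih =>
    intro hN h
    by_cases hle : t ≤ c ⟨N + 1, by omega⟩
    · exact ih (by omega) hle
    · exact ⟨⟨N + 1, by omega⟩, hN, (not_le.1 hle).le, h⟩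

def cardSystem (M : FinMatroid α) {m : ℕ} (c : Fin m → ℕ) (hm : 2 ≤ m) : Set (α → ℝ) :=
  {x : α → ℝ |
    (∀ (F : Finset α) (p : Fin m) (hp : p.val + 1 < m),
      c p < M.r F → M.r F < c ⟨p.val + 1, hp⟩ →
        ((c ⟨p.val + 1, hp⟩ : ℝ) - M.r F) * fsum x F - ((M.r F : ℝ) - c p) * fsum x Fᶜ ≤
          (c p : ℝ) * ((c ⟨p.val + 1, hp⟩ : ℝ) - M.r F)) ∧
    (c ⟨0, Nat.zero_lt_of_lt hm⟩ : ℝ) ≤ fsum x Finset.univ ∧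
    fsum x Finset.univ ≤ (c ⟨m - 1, Nat.sub_one_lt_of_lt hm⟩ : ℝ) ∧
    (∀ F : Finset α, F ≠ ∅ → fsum x F ≤ (M.r F : ℝ)) ∧
    (∀ e : α, 0 ≤ x e)}

section cardSystem

variable (M : FinMatroid α) {m : ℕ} {c : Fin m → ℕ}

theorem convex_cardSystem (hm : 2 ≤ m) : Convex ℝ (cardSystem M c hm) := by
  simp only [cardSystem, Set.ofPred_and, Set.ofPred_forall]
  exact (convex_iInter fun _ => convex_iInter fun _ => convex_iInter fun _ =>
    convex_iInter fun _ => convex_iInter fun _ => convex_setOf_fsum_sub_le _ _ _ _ _).inter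
    ((convex_halfSpace_ge (isLinearMap_fsum _) _).inter
    ((convex_halfSpace_le (isLinearMap_fsum _) _).inter
    ((convex_iInter fun F =>
      convex_iInter fun _ => convex_halfSpace_le (isLinearMap_fsum F) _).inter
    (convex_iInter fun a => convex_halfSpace_ge (LinearMap.proj a : (α → ℝ) →ₗ[ℝ] ℝ).isLinear 0))))

theorem incVec_mem_cardSystem (hm : 2 ≤ m) (hmono : StrictMono c) {I : Finset α}
    (hI : M.Indep I) {q : Fin m} (hq : I.card = c q) : incVec I ∈ cardSystem M c hm := by
  have hrank : ∀ F, ((I ∩ F).card : ℝ) ≤ M.r F := fun F => by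
    exact_mod_cast M.card_le_r (M.subset_indep hI inter_subset_left) inter_subset_right
  have huniv : fsum (incVec I) univ = c q := by rw [fsum_incVec, inter_univ, hq]
  refine ⟨fun F p hp h₀ h₁ => ?_, ?_, ?_, fun F _ => (fsum_incVec I F).trans_le (hrank F),
    incVec_nonneg I⟩
  · have hgap : (c q : ℝ) ≤ c p ∨ (c ⟨p.val + 1, hp⟩ : ℝ) ≤ c q := by
      rcases le_or_gt q p with hqp | hpq
      · exact Or.inl (by exact_mod_cast hmono.monotone hqp)
      · exact Or.inr (by exact_mod_cast hmono.monotone (Fin.mk_le_of_le_val hpq))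
    rw [fsum_compl, huniv, fsum_incVec]
    exact forbidden_ineq_of_card_gap (by exact_mod_cast h₀) (by exact_mod_cast h₁) (hrank F)
      (by rw [← hq]; exact_mod_cast card_le_card inter_subset_left) hgap
  · rw [huniv]
    exact_mod_cast hmono.monotone (Fin.mk_le_of_le_val (Nat.zero_le _))
  · rw [huniv]
    exact_mod_cast hmono.monotone (Fin.le_def.2 (Nat.le_sub_one_of_lt q.isLt))

theorem fsum_le_of_mem_cardSystem {hm : 2 ≤ m} {x : α → ℝ} (hx : x ∈ cardSystem M c hm)
    (hmono : StrictMono c) (p : Fin m) (hp : p.val + 1 < m) {a b : ℝ} (hab : a + b = 1)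
    (ht : fsum x univ = a * c p + b * c ⟨p.val + 1, hp⟩) (F : Finset α) :
    fsum x F ≤ a * min (M.r F : ℝ) (c p) + b * min (M.r F : ℝ) (c ⟨p.val + 1, hp⟩) := by
  obtain ⟨hforb, -, -, hrank, hnonneg⟩ := hx
  have hrankF : fsum x F ≤ M.r F := by
    rcases eq_or_ne F ∅ with rfl | hF
    · simp [fsum]
    · exact hrank F hF
  refine le_interp_min (by exact_mod_cast hmono (Fin.lt_def.2 (Nat.lt_succ_self p)))
    hrankF (show fsum x F ≤ fsum x univ from
      sum_le_sum_of_subset_of_nonneg (subset_univ F) fun a _ _ => hnonneg a)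
    (fun h₀ h₁ => ?_) hab ht
  rw [← fsum_compl]
  exact hforb F p hp (by exact_mod_cast h₀) (by exact_mod_cast h₁)

theorem convex_cardPolytope : Convex ℝ (cardPolytope M c) :=
  convex_convexHull ℝ _

theorem incVec_mem_cardPolytope {I : Finset α} (hI : M.Indep I) {q : Fin m} (hq : I.card = c q) :
    incVec I ∈ cardPolytope M c :=
  subset_convexHull ℝ _ ⟨I, hI, ⟨q, hq⟩, rfl⟩

theorem cardSystem_subset_cardPolytope (hm : 2 ≤ m) (hmono : StrictMono c)
    (hlast : c ⟨m - 1, Nat.sub_one_lt_of_lt hm⟩ ≤ M.r univ) :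
    cardSystem M c hm ⊆ cardPolytope M c := by
  intro x hx
  have hgen : {y | ∃ I, M.Indep I ∧ (∃ p, I.card = c p) ∧ y = incVec I}.Finite :=
    (Set.finite_range incVec).subset fun _ ⟨I, _, _, hy⟩ => ⟨I, hy.symm⟩
  refine mem_convexHull_of_forall_sum_mul_le hgen fun w => ?_
  obtain ⟨e, hw⟩ := exists_equiv_antitone w
  obtain ⟨p, hp, ht₀, ht₁⟩ := exists_le_and_le_succ c hm hx.2.1 hx.2.2.1
  have hk : c p < c ⟨p.val + 1, hp⟩ := hmono (Fin.lt_def.2 (Nat.lt_succ_self p))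
  have hk₁ : c ⟨p.val + 1, hp⟩ ≤ M.r univ :=
    (hmono.monotone (Fin.le_def.2 (Nat.le_sub_one_of_lt hp))).trans hlast
  obtain ⟨a, b, ha, hb, hab, ht⟩ : fsum x univ ∈ segment ℝ (c p : ℝ) (c ⟨p.val + 1, hp⟩) := by
    rw [segment_eq_Icc (by exact_mod_cast hk.le)]
    exact ⟨ht₀, ht₁⟩
  obtain ⟨I₀, hI₀, hI₀k, hI₀e⟩ :=
    M.exists_indep_card_eq_forall_card_inter_prefixSet e (hk.le.trans hk₁)
  obtain ⟨I₁, hI₁, hI₁k, hI₁e⟩ := M.exists_indep_card_eq_forall_card_inter_prefixSet e hk₁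
  refine ⟨a • incVec I₀ + b • incVec I₁,
    convex_cardPolytope M (incVec_mem_cardPolytope M hI₀ hI₀k)
      (incVec_mem_cardPolytope M hI₁ hI₁k) ha hb hab,
    sum_mul_le_of_fsum_prefixSet_le e hw (fun j hj => ?_) ?_⟩
  · rw [fsum_add, fsum_smul, fsum_smul, fsum_incVec, fsum_incVec, hI₀e j hj, hI₁e j hj,
      Nat.cast_min, Nat.cast_min]
    exact fsum_le_of_mem_cardSystem M hx hmono p hp hab (by simpa using ht.symm) _
  · rw [fsum_add, fsum_smul, fsum_smul, fsum_incVec, fsum_incVec, inter_univ, inter_univ,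
      hI₀k, hI₁k, ← ht, smul_eq_mul, smul_eq_mul]

end cardSystem

/-- complete linear description of the cardinality constrained
matroid polytope. -/
theorem cardPolytope_eq_linear_system {α : Type*} [Fintype α] [DecidableEq α]
    (M : FinMatroid α)
    {m : ℕ} (c : Fin m → ℕ) (hm : 2 ≤ m) (hmono : StrictMono c)
    (hlast : c ⟨m - 1, by omega⟩ ≤ M.r Finset.univ) :
    cardPolytope M c =
      {x : α → ℝ |
        (∀ (F : Finset α) (p : Fin m) (hp : p.val + 1 < m),
          c p < M.r F → M.r F < c ⟨p.val + 1, hp⟩ → ((c ⟨p.val + 1, hp⟩ : ℝ) - M.r F) * fsum x F - ((M.r F : ℝ) - c p) * fsum x Fᶜ ≤ (c p : ℝ) * ((c ⟨p.val + 1, hp⟩ : ℝ) - M.r F)) ∧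
        (c ⟨0, by omega⟩ : ℝ) ≤ fsum x Finset.univ ∧
        fsum x Finset.univ ≤ (c ⟨m - 1, by omega⟩ : ℝ) ∧
        (∀ F : Finset α, F ≠ ∅ → fsum x F ≤ (M.r F : ℝ)) ∧
        (∀ e : α, 0 ≤ x e)} := by
  refine (convexHull_min ?_ (convex_cardSystem M hm)).antisymm
    (cardSystem_subset_cardPolytope M hm hmono hlast)
  rintro _ ⟨I, hI, ⟨q, hq⟩, rfl⟩
  exact incVec_mem_cardSystem M hm hmono hI hq
end

section
/- Let x* ∈ ℝ^E with x* ≥ 0 satisfy all rank inequalities x*(F) ≤ r(F) for nonempty F ⊆ E, and suppose c_p < x*(E) < c_{p+1} for some p ∈ {1, …, m−1}. Then for every F ⊆ E: if (c_{p+1} − r(F))·x*(F) − (r(F) − c_p)·x*(E∖F) > c_p·(c_{p+1} − r(F)), then c_p < r(F) < c_{p+1}. -/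
/-!
Write `s = x*(F)`, `t = x*(E ∖ F)`, `r = r(F)`, so that `c_p < s + t < c_{p+1}`, `s ≤ r`
and `t ≥ 0`.
The slack `c_p (c_{p+1} - r) - ((c_{p+1} - r) s - (r - c_p) t)` of the forbidden set inequality
equals `(c_p - r)(c_{p+1} - s - t) + (c_{p+1} - c_p)(r - s)` and also
`(r - c_{p+1})(s + t - c_p) + (c_{p+1} - c_p) t`, so it is nonnegative when `r ≤ c_p`
(first form) and when `c_{p+1} ≤ r` (second form).
-/

open Finset

variable {α : Type*} [Fintype α] [DecidableEq α]

theorem fsum_add_fsum_compl (x : α → ℝ) (F : Finset α) :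
    fsum x F + fsum x Fᶜ = fsum x Finset.univ :=
  Finset.sum_add_sum_compl F x

theorem FinMatroid.fsum_le_r_of_nonempty (M : FinMatroid α) {x : α → ℝ}
    (hrank : ∀ F : Finset α, F ≠ ∅ → fsum x F ≤ (M.r F : ℝ)) (F : Finset α) :
    fsum x F ≤ M.r F := by
  rcases eq_or_ne F ∅ with rfl | hF
  · simp [fsum]
  · exact hrank F hF

section ForbiddenSetInequality

variable {a b r s t : ℝ}

-- `a = c_p`, `b = c_{p+1}`, `r = r(F)`, `s = x(F)`, `t = x(E \ F)`.
theorem forbidden_ineq_of_rank_le_lower (hab : a ≤ b) (hr : r ≤ a) (hs : s ≤ r) (hst : s + t ≤ b) :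
    (b - r) * s - (r - a) * t ≤ a * (b - r) := by
  nlinarith [mul_nonneg (sub_nonneg.2 hr) (sub_nonneg.2 hst),
    mul_nonneg (sub_nonneg.2 hab) (sub_nonneg.2 hs)]

theorem forbidden_ineq_of_upper_le_rank (hab : a ≤ b) (hr : b ≤ r) (ht : 0 ≤ t) (hst : a ≤ s + t) :
    (b - r) * s - (r - a) * t ≤ a * (b - r) := by
  nlinarith [mul_nonneg (sub_nonneg.2 hr) (sub_nonneg.2 hst), mul_nonneg (sub_nonneg.2 hab) ht]

end ForbiddenSetInequality

/-- under c_p < x*(E) < c_(p+1), a violated forbidden set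
inequality forces c_p < r(F) < c_(p+1). -/
theorem violation_forces_rank_window {α : Type*} [Fintype α] [DecidableEq α]
    (M : FinMatroid α)
    {m : ℕ} (c : Fin m → ℕ)
    (x : α → ℝ) (hnn : ∀ e : α, 0 ≤ x e)
    (hrank : ∀ F : Finset α, F ≠ ∅ → fsum x F ≤ (M.r F : ℝ))
    (p : Fin m) (hp : p.val + 1 < m)
    (hlo : (c p : ℝ) < fsum x Finset.univ)
    (hhi : fsum x Finset.univ < (c ⟨p.val + 1, hp⟩ : ℝ)) :
    ∀ F : Finset α, (c p : ℝ) * ((c ⟨p.val + 1, hp⟩ : ℝ) - M.r F) < ((c ⟨p.val + 1, hp⟩ : ℝ) - M.r F) * fsum x F - ((M.r F : ℝ) - c p) * fsum x Fᶜ →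
      c p < M.r F ∧ M.r F < c ⟨p.val + 1, hp⟩ := by
  intro F hviol
  have hs := M.fsum_le_r_of_nonempty hrank F
  have ht : 0 ≤ fsum x Fᶜ := Finset.sum_nonneg fun e _ => hnn e
  have hsum := fsum_add_fsum_compl x F
  have hab : (c p : ℝ) ≤ c ⟨p.val + 1, hp⟩ := by linarith
  constructor
  · by_contra! h
    linarith [forbidden_ineq_of_rank_le_lower hab (by exact_mod_cast h) hs (hsum.trans_lt hhi).le]
  · by_contra! h
    linarith [forbidden_ineq_of_upper_le_rank (r := M.r F) hab (by exact_mod_cast h) ht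
      (hlo.trans_eq hsum.symm).le]
end
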